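/- arXiv:0810.2263 — 6 statements merged into one kernel-verified Lean document; each statement's English description precedes it below -/
import Mathlib

section
/- (Schulze's transitivity theorem) Let A be a finite set and v a nonnegative score matrix, with indirect scores v* defined by the max-min path formula. Define the indirect comparison relation μ(v*) = { (x,y) : v*_{xy} > v*_{yx} }. Then μ(v*) is a transitive relation: if v*_{xy} > v*_{yx} and v*_{yz} > v*_{zy}, then v*_{xz} > v*_{zx}. -/
/-- The score of a path (a list of vertices): the minimum of the scores
of its consecutive links. -/
def pathScore {A : Type*} (v : A → A → ℝ) : List A → ℝ
  | [] => 0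
  | [_] => 0
  | [a, b] => v a b
  | a :: b :: c :: l => min (v a b) (pathScore v (b :: c :: l))

/-- `l` is a path from `x` to `y`: a list with at least two entries,
starting at `x` and ending at `y`. -/
def IsPath {A : Type*} (x y : A) (l : List A) : Prop :=
  2 ≤ l.length ∧ l.head? = some x ∧ l.getLast? = some y

/-- The max-min indirect score `v*_{xy}`: the supremum (attained, since the
set of path scores is finite) of path scores over all paths from `x` to `y`. -/
noncomputable def indirectScore {A : Type*} (v : A → A → ℝ) (x y : A) : ℝ :=
  ⨆ l : {l : List A // IsPath x y l}, pathScore v l.1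


lemma isPath_pair {A : Type*} (a b : A) : IsPath a b [a, b] := by
  refine ⟨by simp, rfl, rfl⟩

instance pathNonempty {A : Type*} (a b : A) : Nonempty {l : List A // IsPath a b l} :=
  ⟨⟨[a, b], isPath_pair a b⟩⟩

lemma pathScore_le {A : Type*} (v : A → A → ℝ) (M : ℝ)
    (h0 : 0 ≤ M) (hM : ∀ a b, v a b ≤ M) : ∀ l, pathScore v l ≤ M := by
  intro l
  induction l with
  | nil => simpa [pathScore]
  | cons a t ih =>
    rcases t with _ | ⟨b, _ | ⟨c, r⟩⟩
    · simpa [pathScore]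
    · simpa [pathScore] using hM a b
    · simp only [pathScore] at ih ⊢
      exact le_trans (min_le_right _ _) ih

lemma bddAbove_pathScores {A : Type*} [Fintype A] (v : A → A → ℝ) (a b : A) :
    BddAbove (Set.range fun l : {l : List A // IsPath a b l} => pathScore v l.1) := by
  obtain ⟨M, hM⟩ := (Set.finite_range (fun p : A × A => v p.1 p.2)).bddAbove
  refine ⟨max 0 M, ?_⟩
  rintro _ ⟨l, rfl⟩
  refine pathScore_le v _ (le_max_left _ _) (fun p q => ?_) _
  exact le_trans (hM ⟨(p, q), rfl⟩) (le_max_right _ _)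

lemma pathScore_append {A : Type*} (v : A → A → ℝ) :
    ∀ (l1 l2 : List A) (b : A), l1.getLast? = some b → l2.head? = some b →
      2 ≤ l1.length → 2 ≤ l2.length →
      min (pathScore v l1) (pathScore v l2) ≤ pathScore v (l1 ++ l2.tail) := by
  intro l1
  induction l1 with
  | nil => intro l2 b h1 h2 h3; simp at h3
  | cons a t ih =>
    intro l2 b h1 h2 h3 h4
    rcases t with _ | ⟨a', t'⟩
    · simp at h3
    rcases t' with _ | ⟨a'', r⟩
    · -- l1 = [a, a']
      have hab : a' = b := by simpa using h1
      subst hab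
      rcases l2 with _ | ⟨p, _ | ⟨q, s⟩⟩
      · simp at h4
      · simp at h4
      · have hp : p = a' := by simpa using h2
        subst hp
        simp [pathScore]
    · -- l1 = a :: a' :: a'' :: r
      have h1' : (a' :: a'' :: r).getLast? = some b := by
        simpa [List.getLast?_cons_cons] using h1
      have key := ih l2 b h1' h2 (by simp) h4
      simp only [pathScore, List.cons_append] at key ⊢
      rw [min_assoc]
      exact min_le_min le_rfl key

lemma indirect_min_trans {A : Type*} [Fintype A] (v : A → A → ℝ) (a b c : A) :
    min (indirectScore v a b) (indirectScore v b c) ≤ indirectScore v a c := by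
  refine le_of_forall_lt fun w hw => ?_
  obtain ⟨⟨l1, hl1⟩, hw1⟩ :=
    exists_lt_of_lt_ciSup (lt_of_lt_of_le hw (min_le_left _ _))
  obtain ⟨⟨l2, hl2⟩, hw2⟩ :=
    exists_lt_of_lt_ciSup (lt_of_lt_of_le hw (min_le_right _ _))
  obtain ⟨hlen1, hhead1, hlast1⟩ := hl1
  obtain ⟨hlen2, hhead2, hlast2⟩ := hl2
  have hpath : IsPath a c (l1 ++ l2.tail) := by
    rcases l1 with _ | ⟨p, t1⟩
    · simp at hlen1
    rcases l2 with _ | ⟨q, _ | ⟨q', s⟩⟩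
    · simp at hlen2
    · simp at hlen2
    refine ⟨?_, ?_, ?_⟩
    · simp; omega
    · simpa using hhead1
    · have h2' : (q' :: s).getLast? = some c := by
        simpa [List.getLast?_cons_cons] using hlast2
      rw [List.getLast?_append, List.tail_cons, h2']
      rfl
  have hsc := pathScore_append v l1 l2 b hlast1 hhead2 hlen1 hlen2
  have : w < pathScore v (l1 ++ l2.tail) :=
    lt_of_lt_of_le (lt_min hw1 hw2) hsc
  exact lt_of_lt_of_le this (le_ciSup (bddAbove_pathScores v a c) ⟨_, hpath⟩)

/-- Schulze's transitivity theorem: the comparison relation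
`μ(v*) = {(x,y) : v*_{xy} > v*_{yx}}` of the indirect scores is transitive. -/
theorem stmt2 {A : Type*} [Fintype A] (v : A → A → ℝ)
    (hv : ∀ x y : A, 0 ≤ v x y)
    (x y z : A) (hxy : x ≠ y) (hyz : y ≠ z) (hxz : x ≠ z)
    (h1 : indirectScore v y x < indirectScore v x y)
    (h2 : indirectScore v z y < indirectScore v y z) :
    indirectScore v z x < indirectScore v x z := by
  set a := indirectScore v x y
  set b := indirectScore v y x
  set c := indirectScore v y z
  set d := indirectScore v z y
  set p := indirectScore v x z
  set q := indirectScore v z x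
  have h3 : min a c ≤ p := indirect_min_trans v x y z
  have h4 : min c q ≤ b := indirect_min_trans v y z x
  have h5 : min q a ≤ d := indirect_min_trans v z x y
  by_contra hq
  push_neg at hq
  rcases le_total a c with hac | hca
  · have hap : a ≤ p := le_trans (by rw [min_eq_left hac]) h3
    have haq : a ≤ q := hap.trans hq
    have : a ≤ b := le_trans (le_min hac haq) h4
    linarith
  · have hcp : c ≤ p := le_trans (by rw [min_eq_right hca]) h3
    have hcq : c ≤ q := hcp.trans hq
    have : c ≤ d := le_trans (le_min hcq hca) h5
    linarith
end

section
/- Let ρ be a transitive antisymmetric relation on a finite set A, and let C ⊆ A be a cluster for ρ. Then there exists a total strict order ξ on A with ρ ⊆ ξ ⊆ ρ̂ such that C is also a cluster for ξ. -/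
/-- The adjoint of a relation: `(a,b) ∈ ρ̂` iff `a ≠ b` and `(b,a) ∉ ρ`. -/
def adjRel {A : Type*} (ρ : A → A → Prop) : A → A → Prop :=
  fun a b => a ≠ b ∧ ¬ ρ b a

/-- Antisymmetric: `(a,b) ∈ ρ` and `(b,a) ∈ ρ` never occur simultaneously. -/
def IsAntisym {A : Type*} (ρ : A → A → Prop) : Prop :=
  ∀ a b : A, ¬ (ρ a b ∧ ρ b a)

/-- Total: for all distinct `a, b`, at least one of `(a,b)`, `(b,a)` is in `ρ`. -/
def IsTotalRel {A : Type*} (ρ : A → A → Prop) : Prop :=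
  ∀ a b : A, a ≠ b → ρ a b ∨ ρ b a

/-- Irreflexive. -/
def IsIrreflRel {A : Type*} (ρ : A → A → Prop) : Prop :=
  ∀ a : A, ¬ ρ a a

/-- A total strict order: transitive, antisymmetric, total and irreflexive. -/
def IsTotalStrictOrder {A : Type*} (ρ : A → A → Prop) : Prop :=
  Transitive ρ ∧ IsAntisym ρ ∧ IsTotalRel ρ ∧ IsIrreflRel ρ

/-- `C` is a cluster for `ρ`: every element outside `C` compares in the same
way with all elements of `C`. -/
def IsClusterRel {A : Type*} (ρ : A → A → Prop) (C : Set A) : Prop :=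
  ∀ x ∉ C, ((∃ a ∈ C, ρ a x) → ∀ b ∈ C, ρ b x) ∧
           ((∃ a ∈ C, ρ x a) → ∀ b ∈ C, ρ x b)

theorem stmt7 {A : Type*} [Fintype A] (ρ : A → A → Prop)
    (htrans : Transitive ρ) (hanti : IsAntisym ρ)
    (C : Set A) (hC : IsClusterRel ρ C) :
    ∃ ξ : A → A → Prop, IsTotalStrictOrder ξ ∧
      (∀ a b : A, ρ a b → ξ a b) ∧ (∀ a b : A, ξ a b → adjRel ρ a b) ∧
      IsClusterRel ξ C := by
  classical
  have hirr : ∀ a, ¬ ρ a a := fun a h => hanti a a ⟨h, h⟩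
  -- reflexive closure is a partial order
  set r : A → A → Prop := fun a b => ρ a b ∨ a = b with hr
  haveI : IsPartialOrder A r := by
    refine { refl := fun a => Or.inr rfl, trans := ?_, antisymm := ?_ }
    · intro a b c hab hbc
      rcases hab with h1 | rfl
      · rcases hbc with h2 | rfl
        · exact Or.inl (htrans h1 h2)
        · exact Or.inl h1
      · exact hbc
    · intro a b hab hba
      rcases hab with h1 | rfl
      · rcases hba with h2 | rfl
        · exact absurd ⟨h1, h2⟩ (hanti a b)
        · rfl
      · rfl
  obtain ⟨s, hlin, hrs⟩ := extend_partialOrder r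
  -- strict linear extension
  set L : A → A → Prop := fun a b => s a b ∧ a ≠ b with hL
  have hstot : ∀ a b, s a b ∨ s b a := hlin.total
  have hsanti : ∀ a b, s a b → s b a → a = b := hlin.antisymm
  have hstrans : ∀ {a b c}, s a b → s b c → s a c := fun h1 h2 => hlin.trans _ _ _ h1 h2
  have hLtrans : Transitive L := by
    rintro a b c ⟨h1, hne1⟩ ⟨h2, hne2⟩
    refine ⟨hstrans h1 h2, ?_⟩
    rintro rfl
    exact hne1 (hsanti a b h1 h2)
  have hLanti : IsAntisym L := by
    rintro a b ⟨⟨h1, hne1⟩, ⟨h2, _⟩⟩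
    exact hne1 (hsanti a b h1 h2)
  have hLtot : IsTotalRel L := by
    intro a b hne
    rcases hstot a b with h | h
    · exact Or.inl ⟨h, hne⟩
    · exact Or.inr ⟨h, hne.symm⟩
  have hLirr : IsIrreflRel L := fun a h => h.2 rfl
  have hρL : ∀ a b, ρ a b → L a b := by
    intro a b h
    refine ⟨hrs a b (Or.inl h), ?_⟩
    rintro rfl; exact hirr a h
  by_cases hCne : ∃ c₀, c₀ ∈ C
  · obtain ⟨c₀, hc₀⟩ := hCne
    set ξ : A → A → Prop := fun a b =>
      if a ∈ C then (if b ∈ C then L a b else L c₀ b)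
      else (if b ∈ C then L a c₀ else L a b) with hξ
    -- helper to unfold
    have hxiCC : ∀ a b, a ∈ C → b ∈ C → (ξ a b ↔ L a b) := by
      intro a b ha hb; simp [hξ, ha, hb]
    have hxiCN : ∀ a b, a ∈ C → b ∉ C → (ξ a b ↔ L c₀ b) := by
      intro a b ha hb; simp [hξ, ha, hb]
    have hxiNC : ∀ a b, a ∉ C → b ∈ C → (ξ a b ↔ L a c₀) := by
      intro a b ha hb; simp [hξ, ha, hb]
    have hxiNN : ∀ a b, a ∉ C → b ∉ C → (ξ a b ↔ L a b) := by
      intro a b ha hb; simp [hξ, ha, hb]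
    have hρξ : ∀ a b, ρ a b → ξ a b := by
      intro a b h
      by_cases ha : a ∈ C <;> by_cases hb : b ∈ C
      · exact (hxiCC a b ha hb).2 (hρL a b h)
      · refine (hxiCN a b ha hb).2 (hρL c₀ b ?_)
        exact (hC b hb).1 ⟨a, ha, h⟩ c₀ hc₀
      · refine (hxiNC a b ha hb).2 (hρL a c₀ ?_)
        exact (hC a ha).2 ⟨b, hb, h⟩ c₀ hc₀
      · exact (hxiNN a b ha hb).2 (hρL a b h)
    have hξtrans : Transitive ξ := by
      intro a b c hab hbc
      by_cases ha : a ∈ C <;> by_cases hb : b ∈ C <;> by_cases hc : c ∈ C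
      · exact (hxiCC a c ha hc).2 (hLtrans ((hxiCC a b ha hb).1 hab) ((hxiCC b c hb hc).1 hbc))
      · exact (hxiCN a c ha hc).2 ((hxiCN b c hb hc).1 hbc)
      · exact absurd ⟨(hxiCN a b ha hb).1 hab, (hxiNC b c hb hc).1 hbc⟩ (hLanti c₀ b)
      · exact (hxiCN a c ha hc).2 (hLtrans ((hxiCN a b ha hb).1 hab) ((hxiNN b c hb hc).1 hbc))
      · exact (hxiNC a c ha hc).2 ((hxiNC a b ha hb).1 hab)
      · exact (hxiNN a c ha hc).2 (hLtrans ((hxiNC a b ha hb).1 hab) ((hxiCN b c hb hc).1 hbc))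
      · exact (hxiNC a c ha hc).2 (hLtrans ((hxiNN a b ha hb).1 hab) ((hxiNC b c hb hc).1 hbc))
      · exact (hxiNN a c ha hc).2 (hLtrans ((hxiNN a b ha hb).1 hab) ((hxiNN b c hb hc).1 hbc))
    have hξanti : IsAntisym ξ := by
      rintro a b ⟨hab, hba⟩
      by_cases ha : a ∈ C <;> by_cases hb : b ∈ C
      · exact hLanti a b ⟨(hxiCC a b ha hb).1 hab, (hxiCC b a hb ha).1 hba⟩
      · exact hLanti c₀ b ⟨(hxiCN a b ha hb).1 hab, (hxiNC b a hb ha).1 hba⟩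
      · exact hLanti a c₀ ⟨(hxiNC a b ha hb).1 hab, (hxiCN b a hb ha).1 hba⟩
      · exact hLanti a b ⟨(hxiNN a b ha hb).1 hab, (hxiNN b a hb ha).1 hba⟩
    have hξtot : IsTotalRel ξ := by
      intro a b hne
      by_cases ha : a ∈ C <;> by_cases hb : b ∈ C
      · rcases hLtot a b hne with h | h
        · exact Or.inl ((hxiCC a b ha hb).2 h)
        · exact Or.inr ((hxiCC b a hb ha).2 h)
      · have : c₀ ≠ b := fun h => hb (h ▸ hc₀)
        rcases hLtot c₀ b this with h | h
        · exact Or.inl ((hxiCN a b ha hb).2 h)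
        · exact Or.inr ((hxiNC b a hb ha).2 h)
      · have : a ≠ c₀ := fun h => ha (h ▸ hc₀)
        rcases hLtot a c₀ this with h | h
        · exact Or.inl ((hxiNC a b ha hb).2 h)
        · exact Or.inr ((hxiCN b a hb ha).2 h)
      · rcases hLtot a b hne with h | h
        · exact Or.inl ((hxiNN a b ha hb).2 h)
        · exact Or.inr ((hxiNN b a hb ha).2 h)
    have hξirr : IsIrreflRel ξ := by
      intro a h
      by_cases ha : a ∈ C
      · exact hLirr a ((hxiCC a a ha ha).1 h)
      · exact hLirr a ((hxiNN a a ha ha).1 h)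
    refine ⟨ξ, ⟨hξtrans, hξanti, hξtot, hξirr⟩, hρξ, ?_, ?_⟩
    · intro a b hab
      constructor
      · rintro rfl; exact hξirr a hab
      · intro h; exact hξanti a b ⟨hab, hρξ b a h⟩
    · intro x hx
      constructor
      · rintro ⟨a, ha, hax⟩ b hb
        exact (hxiCN b x hb hx).2 ((hxiCN a x ha hx).1 hax)
      · rintro ⟨a, ha, hxa⟩ b hb
        exact (hxiNC x b hx hb).2 ((hxiNC x a hx ha).1 hxa)
  · -- C is empty
    push_neg at hCne
    refine ⟨L, ⟨hLtrans, hLanti, hLtot, hLirr⟩, hρL, ?_, ?_⟩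
    · intro a b hab
      exact ⟨hab.2, fun h => hLanti a b ⟨hab, hρL b a h⟩⟩
    · intro x hx
      exact ⟨fun ⟨a, ha, _⟩ b hb => absurd hb (hCne b), fun ⟨a, ha, _⟩ b hb => absurd hb (hCne b)⟩
end

section
/- Let ν be a transitive antisymmetric relation on a finite set A with N elements. For x ∈ A define the Copeland rank r(x) = 1 + |{y : (y,x) ∈ ν}| + (1/2)·|{y : y ≠ x, (x,y) ∉ ν and (y,x) ∉ ν}|. Then any total strict order ξ arranging the elements of A by non-decreasing values of r is sandwiched between ν and its adjoint: ν ⊆ ξ ⊆ ν̂. -/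
theorem stmt8 {A : Type*} [Fintype A] [DecidableEq A]
    (ν : A → A → Prop) [DecidableRel ν]
    (htrans : Transitive ν) (hanti : IsAntisym ν)
    (r : A → ℝ)
    (hr : ∀ x : A, r x =
        1 + ((Finset.univ.filter fun y => ν y x).card : ℝ)
          + (1 / 2) * ((Finset.univ.filter
              fun y => y ≠ x ∧ ¬ ν x y ∧ ¬ ν y x).card : ℝ))
    (ξ : A → A → Prop) (hξ : IsTotalStrictOrder ξ)
    (hmono : ∀ x y : A, ξ x y → r x ≤ r y) :
    (∀ a b : A, ν a b → ξ a b) ∧ (∀ a b : A, ξ a b → adjRel ν a b) := by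
  classical
  obtain ⟨hξtrans, hξanti, hξtot, hξirr⟩ := hξ
  have hlt : ∀ a b : A, ν a b → r a < r b := by
    intro a b hab
    have hnaa : ∀ x, ¬ ν x x := fun x h => hanti x x ⟨h, h⟩
    have hne : a ≠ b := by rintro rfl; exact hnaa a hab
    have hsum : ∀ x : A, 2 * (Finset.univ.filter fun y => ν y x).card
        + (Finset.univ.filter fun y => y ≠ x ∧ ¬ ν x y ∧ ¬ ν y x).card
        = ∑ y : A, (if ν y x then 2 else if y ≠ x ∧ ¬ ν x y ∧ ¬ ν y x then 1 else 0) := by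
      intro x
      rw [Finset.card_filter, Finset.card_filter, Finset.mul_sum, ← Finset.sum_add_distrib]
      apply Finset.sum_congr rfl
      intro y _
      by_cases h1 : ν y x
      · have h2 : ¬(y ≠ x ∧ ¬ ν x y ∧ ¬ ν y x) := by tauto
        simp [h1, h2]
      · by_cases h2 : y ≠ x ∧ ¬ ν x y ∧ ¬ ν y x <;> simp [h1, h2]
    have key : 2 * (Finset.univ.filter fun y => ν y a).card
        + (Finset.univ.filter fun y => y ≠ a ∧ ¬ ν a y ∧ ¬ ν y a).card
        < 2 * (Finset.univ.filter fun y => ν y b).card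
        + (Finset.univ.filter fun y => y ≠ b ∧ ¬ ν b y ∧ ¬ ν y b).card := by
      rw [hsum a, hsum b]
      apply Finset.sum_lt_sum
      · intro y _
        by_cases h1 : ν y a
        · have hyb : ν y b := htrans h1 hab
          have h2 : ¬(y ≠ a ∧ ¬ ν a y ∧ ¬ ν y a) := by tauto
          simp [h1, h2, hyb]
        · by_cases h2 : y ≠ a ∧ ¬ ν a y ∧ ¬ ν y a
          · by_cases h3 : ν y b
            · simp [h1, h2, h3]
            · have hyb : y ≠ b := by rintro rfl; exact h2.2.1 hab
              have hby : ¬ ν b y := fun h => h2.2.1 (htrans hab h)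
              simp [h1, h2, h3, hyb, hby]
          · have h2' : ¬(¬y = a ∧ ¬ν a y) := fun hc => h2 ⟨hc.1, hc.2, h1⟩
            simp [h1, h2']
      · refine ⟨a, Finset.mem_univ a, ?_⟩
        have h1 : ¬ ν a a := hnaa a
        have h2 : ¬(a ≠ a ∧ ¬ ν a a ∧ ¬ ν a a) := by tauto
        simp [h1, h2, hab]
    have keyR : (2 * (Finset.univ.filter fun y => ν y a).card
        + (Finset.univ.filter fun y => y ≠ a ∧ ¬ ν a y ∧ ¬ ν y a).card : ℝ)
        < 2 * (Finset.univ.filter fun y => ν y b).card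
        + (Finset.univ.filter fun y => y ≠ b ∧ ¬ ν b y ∧ ¬ ν y b).card := by
      exact_mod_cast key
    rw [hr a, hr b]
    linarith
  constructor
  · intro a b hab
    have hne : a ≠ b := by rintro rfl; exact hanti a a ⟨hab, hab⟩
    rcases hξtot a b hne with h | h
    · exact h
    · exact absurd (hmono b a h) (not_le.mpr (hlt a b hab))
  · intro a b hab
    refine ⟨?_, ?_⟩
    · rintro rfl; exact hξirr a hab
    · intro h
      exact absurd (hmono a b hab) (not_le.mpr (hlt b a h))
end

section
/- Let ν be a transitive antisymmetric relation on a finite set A, and call a total strict order ξ admissible if ν ⊆ ξ ⊆ ν̂ (adjoint of ν). Given two admissible orders ξ and ξ', there is a finite sequence of admissible orders ξ = ξ₀, ξ₁, …, ξₙ = ξ' such that each ξ_{i+1} is obtained from ξ_i by transposing two elements that are consecutive in ξ_i, and moreover the transposed pair (a,b) always satisfies (a,b) ∉ ν and (b,a) ∉ ν. -/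
/-- A total strict order `ξ` is admissible for `ν` if `ν ⊆ ξ ⊆ ν̂`. -/
def AdmissibleOrder {A : Type*} (ν ξ : A → A → Prop) : Prop :=
  IsTotalStrictOrder ξ ∧ (∀ a b : A, ν a b → ξ a b) ∧
    (∀ a b : A, ξ a b → adjRel ν a b)

/-- `(a,b)` is a consecutive pair in the total order `ξ`. -/
def ConsecutivePair {A : Type*} (ξ : A → A → Prop) (a b : A) : Prop :=
  ξ a b ∧ ¬ ∃ z : A, ξ a z ∧ ξ z b

section Aux
variable {A : Type*}

/-- the transposition of a consecutive pair -/
def swapRel (ξ : A → A → Prop) (a b : A) : A → A → Prop :=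
  fun p q => (ξ p q ∧ ¬ (p = a ∧ q = b)) ∨ (p = b ∧ q = a)

lemma ne_of_rel {ξ : A → A → Prop} (h : IsTotalStrictOrder ξ) {a b : A}
    (hab : ξ a b) : a ≠ b := by
  rintro rfl; exact h.2.2.2 a hab

lemma exists_consec_disc [Fintype A] {ξ ξ' : A → A → Prop}
    (hξ : IsTotalStrictOrder ξ) (hξ' : IsTotalStrictOrder ξ') :
    ∀ k (a b : A), {z | ξ a z ∧ ξ z b}.ncard ≤ k → ξ a b → ξ' b a →
    ∃ c d, ConsecutivePair ξ c d ∧ ξ' d c := by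
  intro k
  induction k with
  | zero =>
    intro a b hcard hab hba
    refine ⟨a, b, ⟨hab, ?_⟩, hba⟩
    rintro ⟨z, hz1, hz2⟩
    have : z ∈ ({z | ξ a z ∧ ξ z b} : Set A) := ⟨hz1, hz2⟩
    have he : ({z | ξ a z ∧ ξ z b} : Set A) = ∅ :=
      Set.ncard_eq_zero (Set.toFinite _) |>.mp (Nat.le_zero.mp hcard)
    rw [he] at this; exact this
  | succ k ih =>
    intro a b hcard hab hba
    by_cases hcons : ∃ z : A, ξ a z ∧ ξ z b
    · obtain ⟨z, hz1, hz2⟩ := hcons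
      have hza : z ≠ a := fun h => hξ.2.2.2 a (h ▸ hz1)
      have hzb : z ≠ b := fun h => hξ.2.2.2 b (h ▸ hz2)
      rcases hξ'.2.2.1 z a (hza) with hza' | haz'
      · -- ξ' z a : use pair (a, z), ξ a z with ξ' z a
        have hsub : {w | ξ a w ∧ ξ w z} ⊂ {w | ξ a w ∧ ξ w b} := by
          constructor
          · rintro w ⟨hw1, hw2⟩; exact ⟨hw1, hξ.1 hw2 hz2⟩
          · intro hsup
            have := hsup (⟨hz1, hz2⟩ : z ∈ {w | ξ a w ∧ ξ w b})
            exact hξ.2.2.2 z this.2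
        have := Set.ncard_lt_ncard hsub (Set.toFinite _)
        exact ih a z (by omega) hz1 hza'
      · -- ξ' a z ; compare z and b in ξ'
        rcases hξ'.2.2.1 b z (fun h => hzb h.symm) with hbz' | hzb'
        · -- ξ' b z together with ξ z b discrepancy
          have hsub : {w | ξ z w ∧ ξ w b} ⊂ {w | ξ a w ∧ ξ w b} := by
            constructor
            · rintro w ⟨hw1, hw2⟩; exact ⟨hξ.1 hz1 hw1, hw2⟩
            · intro hsup
              have := hsup (⟨hz1, hz2⟩ : z ∈ {w | ξ a w ∧ ξ w b})
              exact hξ.2.2.2 z this.1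
          have := Set.ncard_lt_ncard hsub (Set.toFinite _)
          exact ih z b (by omega) hz2 hbz'
        · exact absurd (hξ'.1 hba haz') (fun h => hξ'.2.1 z b ⟨hzb', h⟩)
    · exact ⟨a, b, ⟨hab, hcons⟩, hba⟩

lemma swap_admissible {ν ξ : A → A → Prop} (hξ : AdmissibleOrder ν ξ) {a b : A}
    (hc : ConsecutivePair ξ a b) (hnab : ¬ ν a b) (hnba : ¬ ν b a) :
    AdmissibleOrder ν (swapRel ξ a b) := by
  obtain ⟨⟨htr, hanti, htot, hirr⟩, hsub, hsup⟩ := hξ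
  have hab : ξ a b := hc.1
  have hne : a ≠ b := fun h => hirr a (h ▸ hab)
  refine ⟨⟨?_, ?_, ?_, ?_⟩, ?_, ?_⟩
  · -- transitive
    rintro p q r h1 h2
    rcases h1 with ⟨hpq, hpq'⟩ | ⟨hpb, hqa⟩
    · rcases h2 with ⟨hqr, hqr'⟩ | ⟨hqb, hra⟩
      · left
        refine ⟨htr hpq hqr, fun hh => hc.2 ⟨q, hh.1 ▸ hpq, hh.2 ▸ hqr⟩⟩
      · -- q = b, r = a
        have hpb : ξ p b := hqb ▸ hpq
        have hpa : p ≠ a := fun h => hpq' ⟨h, hqb⟩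
        rcases htot p a hpa with h | h
        · rw [hra]; exact Or.inl ⟨h, fun hh => hpa hh.1⟩
        · exact absurd (⟨p, h, hpb⟩ : ∃ z, ξ a z ∧ ξ z b) hc.2
    · rcases h2 with ⟨hqr, hqr'⟩ | ⟨hqb, hra⟩
      · -- p = b, q = a
        have har : ξ a r := hqa ▸ hqr
        have hrb : r ≠ b := fun h => hqr' ⟨hqa, h⟩
        rcases htot b r (fun h => hrb h.symm) with h | h
        · rw [hpb]; exact Or.inl ⟨h, fun hh => hne hh.1.symm⟩
        · exact absurd (⟨r, har, h⟩ : ∃ z, ξ a z ∧ ξ z b) hc.2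
      · exact absurd (hqa.symm.trans hqb) hne
  · -- antisym
    rintro p q ⟨h1, h2⟩
    rcases h1 with ⟨hpq, hpq'⟩ | ⟨hpb, hqa⟩
    · rcases h2 with ⟨hqp, _⟩ | ⟨hqb, hpa⟩
      · exact hanti p q ⟨hpq, hqp⟩
      · exact hpq' ⟨hpa, hqb⟩
    · rcases h2 with ⟨hqp, hqp'⟩ | ⟨hqb, hpa⟩
      · exact hqp' ⟨hqa, hpb⟩
      · exact hne (hpa.symm.trans hpb)
  · -- total
    intro p q hpq
    rcases htot p q hpq with h | h
    · by_cases hh : p = a ∧ q = b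
      · exact Or.inr (Or.inr ⟨hh.2, hh.1⟩)
      · exact Or.inl (Or.inl ⟨h, hh⟩)
    · by_cases hh : q = a ∧ p = b
      · exact Or.inl (Or.inr ⟨hh.2, hh.1⟩)
      · exact Or.inr (Or.inl ⟨h, hh⟩)
  · -- irrefl
    rintro p (⟨h, _⟩ | ⟨h1, h2⟩)
    · exact hirr p h
    · exact hne (h2.symm.trans h1)
  · -- ν ⊆ swap
    intro p q h
    left
    refine ⟨hsub p q h, ?_⟩
    rintro ⟨h1, h2⟩
    subst h1; subst h2
    exact hnab h
  · -- swap ⊆ adj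
    rintro p q (⟨h, _⟩ | ⟨hpb, hqa⟩)
    · exact hsup p q h
    · rw [hpb, hqa]
      exact ⟨fun h => hne h.symm, hnab⟩

end Aux

theorem stmt9 {A : Type*} [Fintype A] (ν : A → A → Prop)
    (htrans : Transitive ν) (hanti : IsAntisym ν)
    (ξ ξ' : A → A → Prop)
    (hξ : AdmissibleOrder ν ξ) (hξ' : AdmissibleOrder ν ξ') :
    ∃ (n : ℕ) (χ : ℕ → A → A → Prop),
      χ 0 = ξ ∧ χ n = ξ' ∧
      (∀ i ≤ n, AdmissibleOrder ν (χ i)) ∧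
      (∀ i < n, ∃ a b : A, ConsecutivePair (χ i) a b ∧ ¬ ν a b ∧ ¬ ν b a ∧
        χ (i + 1) = fun p q => (χ i p q ∧ ¬ (p = a ∧ q = b)) ∨ (p = b ∧ q = a)) := by
  classical
  -- strong induction on the number of discrepancies
  suffices H : ∀ k (ξ : A → A → Prop), AdmissibleOrder ν ξ →
      {p : A × A | ξ p.1 p.2 ∧ ξ' p.2 p.1}.ncard ≤ k →
      ∃ (n : ℕ) (χ : ℕ → A → A → Prop),
      χ 0 = ξ ∧ χ n = ξ' ∧
      (∀ i ≤ n, AdmissibleOrder ν (χ i)) ∧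
      (∀ i < n, ∃ a b : A, ConsecutivePair (χ i) a b ∧ ¬ ν a b ∧ ¬ ν b a ∧
        χ (i + 1) = fun p q => (χ i p q ∧ ¬ (p = a ∧ q = b)) ∨ (p = b ∧ q = a)) by
    exact H _ ξ hξ le_rfl
  intro k
  induction k with
  | zero =>
    intro ξ hξ hcard
    -- no discrepancies: ξ = ξ'
    have he : {p : A × A | ξ p.1 p.2 ∧ ξ' p.2 p.1} = ∅ :=
      Set.ncard_eq_zero (Set.toFinite _) |>.mp (Nat.le_zero.mp hcard)
    have heq : ξ = ξ' := by
      funext p q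
      ext
      constructor
      · intro h
        have hne : p ≠ q := ne_of_rel hξ.1 h
        rcases hξ'.1.2.2.1 p q hne with h' | h'
        · exact h'
        · exfalso
          have hm : (p, q) ∈ {p : A × A | ξ p.1 p.2 ∧ ξ' p.2 p.1} := ⟨h, h'⟩
          rw [he] at hm; exact hm
      · intro h
        have hne : p ≠ q := ne_of_rel hξ'.1 h
        rcases hξ.1.2.2.1 p q hne with h' | h'
        · exact h'
        · exfalso
          have hm : (q, p) ∈ {p : A × A | ξ p.1 p.2 ∧ ξ' p.2 p.1} := ⟨h', h⟩
          rw [he] at hm; exact hm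
    exact ⟨0, fun _ => ξ, rfl, heq, fun i _ => hξ, fun i hi => absurd hi (Nat.not_lt_zero i)⟩
  | succ k ih =>
    intro ξ hξ hcard
    by_cases hD : {p : A × A | ξ p.1 p.2 ∧ ξ' p.2 p.1} = ∅
    · exact ih ξ hξ (by rw [hD]; simp)
    · obtain ⟨⟨a0, b0⟩, ha0, hb0⟩ := Set.nonempty_iff_ne_empty.mpr hD
      obtain ⟨a, b, hcons, hba'⟩ :=
        exists_consec_disc hξ.1 hξ'.1 ({z | ξ a0 z ∧ ξ z b0}.ncard) a0 b0 le_rfl ha0 hb0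
      have hab : ξ a b := hcons.1
      have hnab : ¬ ν a b := (hξ'.2.2 b a hba').2
      have hnba : ¬ ν b a := (hξ.2.2 a b hab).2
      set ξ₁ := swapRel ξ a b with hξ₁def
      have hξ₁ : AdmissibleOrder ν ξ₁ := swap_admissible hξ hcons hnab hnba
      -- discrepancy set decreases
      have hDeq : {p : A × A | ξ₁ p.1 p.2 ∧ ξ' p.2 p.1} ⊂
          {p : A × A | ξ p.1 p.2 ∧ ξ' p.2 p.1} := by
        constructor
        · rintro ⟨p, q⟩ ⟨h1, h2⟩
          rcases h1 with ⟨h1, _⟩ | ⟨rfl, rfl⟩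
          · exact ⟨h1, h2⟩
          · exact absurd ⟨h2, hba'⟩ (hξ'.1.2.1 _ _)
        · intro hsup
          have hmem : ((a, b) : A × A) ∈ {p : A × A | ξ p.1 p.2 ∧ ξ' p.2 p.1} := ⟨hab, hba'⟩
          have := hsup hmem
          rcases this.1 with ⟨_, hne'⟩ | ⟨h1, _⟩
          · exact hne' ⟨rfl, rfl⟩
          · exact ne_of_rel hξ.1 hab h1
      have hlt := Set.ncard_lt_ncard hDeq (Set.toFinite _)
      obtain ⟨n, χ, h0, hn, hadm, hstep⟩ := ih ξ₁ hξ₁ (by omega)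
      refine ⟨n + 1, fun i => if i = 0 then ξ else χ (i - 1), by simp, by simp [hn], ?_, ?_⟩
      · intro i hi
        rcases Nat.eq_zero_or_pos i with rfl | hpos
        · exact hξ
        · have hne0 : i ≠ 0 := Nat.pos_iff_ne_zero.mp hpos
          simp only [if_neg hne0]
          exact hadm (i - 1) (by omega)
      · intro i hi
        rcases Nat.eq_zero_or_pos i with rfl | hpos
        · refine ⟨a, b, hcons, hnab, hnba, ?_⟩
          show χ 0 = swapRel ξ a b
          exact h0
        · have hne0 : i ≠ 0 := Nat.pos_iff_ne_zero.mp hpos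
          obtain ⟨a', b', hc', hn1, hn2, heq⟩ := hstep (i - 1) (by omega)
          refine ⟨a', b', ?_, hn1, hn2, ?_⟩
          · simpa only [if_neg hne0] using hc'
          · have h1 : i + 1 - 1 = (i - 1) + 1 := by omega
            simp only [if_neg hne0, if_neg (show i + 1 ≠ 0 by omega), h1, heq]
end

section
/- (Majority principle for indirect scores) Let A be a finite set and v a score matrix with 0 ≤ v_{xy} and v_{xy} + v_{yx} ≤ 1 for all distinct x,y. Suppose A is partitioned into nonempty sets X and Y with v_{xy} > 1/2 for every x ∈ X and y ∈ Y. Then for every x ∈ X and y ∈ Y one has v*_{yx} < 1/2 < v*_{xy}, and in particular (x,y) ∈ μ(v*) = { (p,q) : v*_{pq} > v*_{qp} }. -/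
lemma pathScore_le_head {A : Type*} (v : A → A → ℝ) (a b : A) (l : List A) :
    pathScore v (a :: b :: l) ≤ v a b := by
  cases l with
  | nil => simp [pathScore]
  | cons c l' => exact min_le_left _ _

lemma cross {A : Type*} (v : A → A → ℝ) (X Y : Set A)
    (hcov : ∀ a : A, a ∈ X ∨ a ∈ Y) (hv : ∀ x y : A, 0 ≤ v x y) :
    ∀ l : List A, ∀ a, a ∈ Y → ∀ x, x ∈ X → (a :: l).getLast? = some x →
      ∃ p, p ∈ Y ∧ ∃ q, q ∈ X ∧ pathScore v (a :: l) ≤ v p q := by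
  intro l
  induction l with
  | nil =>
    intro a ha x hx hlast
    exact ⟨a, ha, x, hx, by simpa [pathScore] using hv a x⟩
  | cons b l ih =>
    intro a ha x hx hlast
    rcases hcov b with hb | hb
    · exact ⟨a, ha, b, hb, pathScore_le_head v a b l⟩
    · cases l with
      | nil =>
        simp at hlast
        subst hlast
        exact ⟨a, ha, b, hx, le_of_eq rfl⟩
      | cons c l' =>
        rw [List.getLast?_cons_cons] at hlast
        obtain ⟨p, hp, q, hq, h⟩ := ih b hb x hx hlast
        exact ⟨p, hp, q, hq, le_trans (min_le_right _ _) h⟩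

/-- Majority principle for indirect scores. -/
theorem stmt12 {A : Type*} [Fintype A] (v : A → A → ℝ)
    (hv : ∀ x y : A, 0 ≤ v x y)
    (hbound : ∀ x y : A, x ≠ y → v x y + v y x ≤ 1)
    (X Y : Set A) (hXY : X ∪ Y = Set.univ) (hdisj : X ∩ Y = ∅)
    (hX : X.Nonempty) (hY : Y.Nonempty)
    (hmaj : ∀ x ∈ X, ∀ y ∈ Y, 1 / 2 < v x y) :
    ∀ x ∈ X, ∀ y ∈ Y,
      indirectScore v y x < 1 / 2 ∧ 1 / 2 < indirectScore v x y ∧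
      indirectScore v y x < indirectScore v x y := by
  intro x hx y hy
  have hcov : ∀ a : A, a ∈ X ∨ a ∈ Y := by
    intro a
    have : a ∈ X ∪ Y := hXY ▸ Set.mem_univ a
    exact this
  -- a global bound on pathScores
  classical
  have hne : Nonempty A := ⟨x⟩
  set M : ℝ := max 0 ((Finset.univ ×ˢ Finset.univ : Finset (A × A)).sup'
      (by simp [Finset.univ_nonempty]) (fun p => v p.1 p.2)) with hM
  have hle : ∀ a b : A, v a b ≤ M := by
    intro a b
    refine le_max_of_le_right ?_
    exact Finset.le_sup' (f := fun p : A × A => v p.1 p.2) (by simp : (a, b) ∈ _)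
  have hps : ∀ l : List A, pathScore v l ≤ M := by
    intro l
    match l with
    | [] => exact le_max_left _ _
    | [a] => exact le_max_left _ _
    | a :: b :: l => exact le_trans (pathScore_le_head v a b l) (hle a b)
  have hbdd : ∀ p q : A, BddAbove (Set.range fun l : {l : List A // IsPath p q l} =>
      pathScore v l.1) := by
    intro p q
    exact ⟨M, by rintro r ⟨l, rfl⟩; exact hps l.1⟩
  have hpathxy : IsPath x y [x, y] := by
    refine ⟨by simp, by simp, by simp⟩
  have hpathyx : IsPath y x [y, x] := ⟨by simp, by simp, by simp⟩
  have h2 : 1 / 2 < indirectScore v x y := by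
    have := le_ciSup (hbdd x y) (⟨[x, y], hpathxy⟩ : {l : List A // IsPath x y l})
    have hxy : (1:ℝ)/2 < pathScore v [x, y] := by
      simpa [pathScore] using hmaj x hx y hy
    exact lt_of_lt_of_le hxy this
  -- upper bound for paths from y to x
  have hXfin : X.Finite := Set.toFinite X
  have hYfin : Y.Finite := Set.toFinite Y
  set S : Finset (A × A) := hYfin.toFinset ×ˢ hXfin.toFinset with hS
  have hSne : S.Nonempty := ⟨(y, x), by simp only [hS, Finset.mem_product, Set.Finite.mem_toFinset]; exact ⟨hy, hx⟩⟩
  set c : ℝ := S.sup' hSne (fun p => v p.1 p.2) with hc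
  have hclt : c < 1 / 2 := by
    rw [hc, Finset.sup'_lt_iff]
    rintro ⟨p, q⟩ hpq
    simp only [hS, Finset.mem_product, Set.Finite.mem_toFinset] at hpq
    obtain ⟨hp, hq⟩ := hpq
    have hne' : q ≠ p := by
      intro h
      have : q ∈ X ∩ Y := ⟨hq, h ▸ hp⟩
      simp [hdisj] at this
    have h1 := hbound q p hne'
    have h2 := hmaj q hq p hp
    linarith
  have h1 : indirectScore v y x < 1 / 2 := by
    refine lt_of_le_of_lt ?_ hclt
    haveI : Nonempty {l : List A // IsPath y x l} := ⟨⟨[y, x], hpathyx⟩⟩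
    refine ciSup_le ?_
    rintro ⟨l, hlen, hhead, hlast⟩
    match l, hlen with
    | a :: b :: l, _ =>
      have ha : a ∈ Y := by
        have : a = y := by simpa using hhead
        exact this ▸ hy
      obtain ⟨p, hp, q, hq, hle'⟩ := cross v X Y hcov hv (b :: l) a ha x hx hlast
      refine le_trans hle' ?_
      exact Finset.le_sup' (f := fun p : A × A => v p.1 p.2)
        (by simp only [hS, Finset.mem_product, Set.Finite.mem_toFinset]; exact ⟨hp, hq⟩ : (p, q) ∈ S)
  exact ⟨h1, h2, lt_trans h1 h2⟩
end

section
/- Let A be a finite set, v a nonnegative score matrix, and C ⊆ A a cluster for v. If x, y ∈ A are not both in C, then the indirect score v*_{xy} equals the maximum of path scores over only those paths from x to y that contain at most one element of C. -/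
/-!
A path's score is at least `m` iff each of its links scores at least `m`. Given a path from `x`
to `y` meeting `C`, let `a` and `b` be its first and last elements in `C`; replace the stretch
from `a` to `b` by a single element of `C` (namely `a` if `x ∈ C`, else `b`, so that the endpoints
are kept). The links entering and leaving that element join it to vertices outside `C`, and the
cluster property makes their scores equal to those of the original links into `a` and out of `b`.
So the new path meets `C` once and scores at least as much. Both suprema are over a finite set of
values, since a path score is always one of the link scores.
-/

section

variable {A : Type*}

def IsCluster {β : Type*} (v : A → A → β) (C : Set A) : Prop :=
  ∀ a ∈ C, ∀ b ∈ C, ∀ x ∉ C, v a x = v b x ∧ v x a = v x b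

lemma pathScore_mem_insert_range (v : A → A → ℝ) :
    ∀ l : List A, pathScore v l ∈ insert 0 (Set.range (Function.uncurry v))
  | [] | [_] => Set.mem_insert _ _
  | [a, b] => Set.mem_insert_of_mem _ ⟨(a, b), rfl⟩
  | a :: b :: c :: l => by
    rw [pathScore]
    rcases min_choice (v a b) (pathScore v (b :: c :: l)) with h | h <;> rw [h]
    · exact Set.mem_insert_of_mem _ ⟨(a, b), rfl⟩
    · exact pathScore_mem_insert_range v (b :: c :: l)

lemma finite_range_pathScore [Finite A] (v : A → A → ℝ) : (Set.range (pathScore v)).Finite :=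
  ((Set.finite_range _).insert 0).subset <| Set.range_subset_iff.2 (pathScore_mem_insert_range v)

lemma le_pathScore_iff (v : A → A → ℝ) (m : ℝ) :
    ∀ {l : List A}, 2 ≤ l.length → (m ≤ pathScore v l ↔ l.IsChain (fun p q => m ≤ v p q))
  | [], h | [_], h => by simp at h
  | [a, b], _ => by simp [pathScore]
  | a :: b :: c :: l, _ => by
    rw [pathScore, le_min_iff, List.isChain_cons_cons, le_pathScore_iff v m (by simp)]

lemma List.exists_split_first {p : A → Prop} {l : List A} (h : ∃ a ∈ l, p a) :
    ∃ P a R, l = P ++ a :: R ∧ p a ∧ ∀ z ∈ P, ¬ p z := by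
  classical
  obtain ⟨a, ha⟩ := Option.isSome_iff_exists.1
    (List.find?_isSome (p := fun a => decide (p a)) (xs := l) |>.2 (by simpa using h))
  obtain ⟨hpa, P, R, rfl, hP⟩ := List.find?_eq_some_iff_append.1 ha
  exact ⟨P, a, R, rfl, by simpa using hpa, fun z hz => by simpa using hP z hz⟩

lemma List.exists_split_last {p : A → Prop} {l : List A} (h : ∃ a ∈ l, p a) :
    ∃ T b S, l = T ++ b :: S ∧ p b ∧ ∀ z ∈ S, ¬ p z := by
  obtain ⟨S, b, T, hl, hb, hS⟩ :=
    List.exists_split_first (l := l.reverse) (by simpa using h)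
  refine ⟨T.reverse, b, S.reverse, ?_, hb, fun z hz => hS z (List.mem_reverse.1 hz)⟩
  simpa using congrArg List.reverse hl

lemma List.iff_eq_nil_of_head?_append_cons {p : A → Prop} {P R : List A} {a x : A}
    (h : (P ++ a :: R).head? = some x) (ha : p a) (hP : ∀ z ∈ P, ¬ p z) : p x ↔ P = [] := by
  rcases P with _ | ⟨z, P⟩
  · obtain rfl : a = x := by simpa using h
    simpa using ha
  · obtain rfl : z = x := by simpa using h
    simpa using hP z (by simp)

lemma List.iff_eq_nil_of_getLast?_append_cons {p : A → Prop} {T S : List A} {b y : A}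
    (h : (T ++ b :: S).getLast? = some y) (hb : p b) (hS : ∀ z ∈ S, ¬ p z) :
    p y ↔ S = [] := by
  rw [List.getLast?_append_cons] at h
  rcases S.eq_nil_or_concat with rfl | ⟨S, z, rfl⟩
  · obtain rfl : b = y := by simpa using h
    simpa using hb
  · rw [List.concat_eq_append, ← List.cons_append, List.getLast?_concat] at h
    obtain rfl : z = y := by simpa using h
    simpa using hS z (by simp)

lemma List.countP_append_cons_of_forall_not {p : A → Bool} {P S : List A} {c : A}
    (hP : ∀ z ∈ P, ¬ p z) (hc : p c) (hS : ∀ z ∈ S, ¬ p z) : (P ++ c :: S).countP p = 1 := by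
  rw [List.countP_append, List.countP_cons, List.countP_eq_zero.2 hP, List.countP_eq_zero.2 hS]
  simp [hc]

section Cluster

variable {v : A → A → ℝ} {C : Set A}

lemma IsCluster.isChain_append_cons (hC : IsCluster v C) {m : ℝ} {P S : List A} {a b c : A}
    (ha : a ∈ C) (hb : b ∈ C) (hc : c ∈ C) (hP : ∀ z ∈ P, z ∉ C) (hS : ∀ z ∈ S, z ∉ C)
    (hPa : (P ++ [a]).IsChain (fun p q => m ≤ v p q))
    (hbS : (b :: S).IsChain (fun p q => m ≤ v p q)) :
    (P ++ c :: S).IsChain (fun p q => m ≤ v p q) := by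
  rw [List.isChain_append] at hPa ⊢
  rw [List.isChain_cons] at hbS ⊢
  refine ⟨hPa.1, ⟨fun z hz => ?_, hbS.2⟩, fun z hz w hw => ?_⟩
  · have hzS : z ∈ S := List.mem_of_mem_head? hz
    rw [(hC c hc b hb z (hS z hzS)).1]
    exact hbS.1 z hz
  · obtain rfl : c = w := by simpa using hw
    rw [(hC c hc a ha z (hP z (List.mem_of_mem_getLast? hz))).2]
    exact hPa.2.2 z hz a rfl

lemma IsCluster.exists_isPath_countP_le_one [DecidablePred (· ∈ C)] (hC : IsCluster v C)
    {x y : A} (hxy : ¬ (x ∈ C ∧ y ∈ C)) {l : List A} (hl : IsPath x y l) :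
    ∃ l', (IsPath x y l' ∧ l'.countP (fun a => decide (a ∈ C)) ≤ 1) ∧
      pathScore v l ≤ pathScore v l' := by
  by_cases hlC : ∃ a ∈ l, a ∈ C
  swap
  · push Not at hlC
    have hl0 : l.countP (fun a => decide (a ∈ C)) = 0 :=
      List.countP_eq_zero.2 fun a ha => by simpa using hlC a ha
    exact ⟨l, ⟨hl, hl0.trans_le zero_le_one⟩, le_rfl⟩
  obtain ⟨hlen, hhead, hlast⟩ := hl
  obtain ⟨P, a, R, hPR, ha, hP⟩ := List.exists_split_first hlC
  obtain ⟨T, b, S, hTS, hb, hS⟩ := List.exists_split_last hlC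
  set m := pathScore v l
  have hchain := (le_pathScore_iff v m hlen).1 le_rfl
  have hPa : (P ++ [a]).IsChain (fun p q => m ≤ v p q) := by
    rw [hPR, show P ++ a :: R = (P ++ [a]) ++ R by simp] at hchain
    exact hchain.left_of_append
  have hbS : (b :: S).IsChain (fun p q => m ≤ v p q) := by
    rw [hTS] at hchain
    exact hchain.right_of_append
  have hxP : x ∈ C ↔ P = [] := List.iff_eq_nil_of_head?_append_cons (hPR ▸ hhead) ha hP
  have hyS : y ∈ C ↔ S = [] := List.iff_eq_nil_of_getLast?_append_cons (hTS ▸ hlast) hb hS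
  set c := if x ∈ C then a else b with hc
  have hcC : c ∈ C := by rw [hc]; split_ifs <;> assumption
  have hlen' : 2 ≤ (P ++ c :: S).length := by
    have hPS : P ≠ [] ∨ S ≠ [] := by rw [Ne, Ne, ← hxP, ← hyS]; tauto
    rcases hPS with h | h <;> have := List.length_pos_iff.2 h <;> simp <;> omega
  refine ⟨P ++ c :: S, ⟨⟨hlen', ?_, ?_⟩, ?_⟩,
    (le_pathScore_iff v m hlen').2 (hC.isChain_append_cons ha hb hcC hP hS hPa hbS)⟩
  · rw [hPR] at hhead
    by_cases hx : x ∈ C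
    · rw [hxP.1 hx] at hhead ⊢
      simpa [hc, hx] using hhead
    · rwa [List.head?_append_of_ne_nil _ (mt hxP.2 hx)] at hhead ⊢
  · rw [hTS, List.getLast?_append_cons] at hlast
    rw [List.getLast?_append_cons]
    by_cases hx : x ∈ C
    · rcases S with _ | ⟨s, S⟩
      · exact absurd (hyS.2 rfl) fun hy => hxy ⟨hx, hy⟩
      · rwa [List.getLast?_cons_cons] at hlast ⊢
    · simpa [hc, hx] using hlast
  · exact (List.countP_append_cons_of_forall_not (by simpa using hP) (by simpa using hcC)
      (by simpa using hS)).le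

end Cluster

end

theorem stmt14_general {A : Type*} [Fintype A] [DecidableEq A] (v : A → A → ℝ)
    (C : Finset A)
    (hC : ∀ a ∈ C, ∀ b ∈ C, ∀ x ∉ C, v a x = v b x ∧ v x a = v x b)
    (x y : A) (hnot : ¬ (x ∈ C ∧ y ∈ C)) :
    indirectScore v x y =
      ⨆ l : {l : List A // IsPath x y l ∧ l.countP (fun a => decide (a ∈ C)) ≤ 1},
        pathScore v l.1 := by
  have hcl : IsCluster v (C : Set A) := hC
  have hbdd := (finite_range_pathScore v).bddAbove
  have hxy : IsPath x y [x, y] := ⟨le_rfl, rfl, rfl⟩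
  obtain ⟨l₀, hl₀, -⟩ := hcl.exists_isPath_countP_le_one hnot hxy
  have : Nonempty {l // IsPath x y l} := ⟨⟨_, hxy⟩⟩
  have : Nonempty {l // IsPath x y l ∧ l.countP (fun a => decide (a ∈ C)) ≤ 1} := ⟨⟨l₀, hl₀⟩⟩
  apply le_antisymm
  · refine ciSup_mono_of_forall_exists (hbdd.mono (Set.range_comp_subset_range _ _)) fun l => ?_
    obtain ⟨l', hl', hle⟩ := hcl.exists_isPath_countP_le_one hnot l.2
    exact ⟨⟨l', hl'⟩, hle⟩
  · exact ciSup_mono_of_forall_exists (hbdd.mono (Set.range_comp_subset_range _ _))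
      fun l => ⟨⟨l.1, l.2.1⟩, le_rfl⟩

theorem stmt14 {A : Type*} [Fintype A] [DecidableEq A] (v : A → A → ℝ)
    (hv : ∀ x y : A, 0 ≤ v x y)
    (C : Finset A)
    (hC : ∀ a ∈ C, ∀ b ∈ C, ∀ x ∉ C, v a x = v b x ∧ v x a = v x b)
    (x y : A) (hxy : x ≠ y) (hnot : ¬ (x ∈ C ∧ y ∈ C)) :
    indirectScore v x y =
      ⨆ l : {l : List A // IsPath x y l ∧ l.countP (fun a => decide (a ∈ C)) ≤ 1},
        pathScore v l.1 :=
  stmt14_general v C hC x y hnot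
end
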